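/- arXiv:1209.5441 — 5 statements merged into one kernel-verified Lean document; each statement's English description precedes it below -/
import Mathlib

section
/- For all natural numbers a and b with a + 2 ≤ b, the open interval (a..b) has a unique 2-fattest number: there exists exactly one integer f with a < f < b such that every integer g with a < g < b and g ≠ f has strictly smaller 2-adic valuation than f. -/
/-!
Take `f` in the interval with the largest 2-adic valuation `k`. If some other `g` there had
valuation `k` too, both would be odd multiples of `2 ^ k`, and the even multiple of `2 ^ k`
lying between them would have valuation larger than `k`.
-/

lemma add_lt_and_two_mul_dvd_add {d g f : ℕ} (hg : d ∣ g) (hf : d ∣ f) (hgf : g < f)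
    (hg₂ : ¬2 * d ∣ g) (hf₂ : ¬2 * d ∣ f) : g + d < f ∧ 2 * d ∣ g + d := by
  obtain ⟨u, rfl⟩ := hg
  obtain ⟨v, rfl⟩ := hf
  have hu : ¬2 ∣ u := fun h => hg₂ (by simpa [mul_comm] using mul_dvd_mul_left d h)
  have hv : ¬2 ∣ v := fun h => hf₂ (by simpa [mul_comm] using mul_dvd_mul_left d h)
  have huv : u < v := Nat.lt_of_mul_lt_mul_left hgf
  have hd : 0 < d := Nat.pos_of_ne_zero (by rintro rfl; simp at hgf)
  refine ⟨?_, ?_⟩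
  · calc d * u + d = d * (u + 1) := by ring
      _ < d * v := Nat.mul_lt_mul_of_pos_left (by omega) hd
  · obtain ⟨w, hw⟩ : 2 ∣ u + 1 := by omega
    exact ⟨w, by rw [show d * u + d = d * (u + 1) by ring, hw]; ring⟩

lemma exists_between_padicValNat_two_lt {g f : ℕ} (hg : g ≠ 0) (hgf : g < f)
    (hv : padicValNat 2 g = padicValNat 2 f) :
    ∃ h, g < h ∧ h < f ∧ padicValNat 2 g < padicValNat 2 h := by
  have hf : f ≠ 0 := by omega
  have hg₂ : ¬2 * 2 ^ padicValNat 2 g ∣ g := by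
    rw [← pow_succ']; exact pow_succ_padicValNat_not_dvd hg
  have hf₂ : ¬2 * 2 ^ padicValNat 2 g ∣ f := by
    rw [← pow_succ', hv]; exact pow_succ_padicValNat_not_dvd hf
  obtain ⟨hlt, hdvd⟩ := add_lt_and_two_mul_dvd_add pow_padicValNat_dvd
    (by rw [hv]; exact pow_padicValNat_dvd) hgf hg₂ hf₂
  refine ⟨g + 2 ^ padicValNat 2 g, Nat.lt_add_of_pos_right (by positivity), hlt, ?_⟩
  rw [← pow_succ', padicValNat_dvd_iff_le (by omega)] at hdvd
  omega

/-- For all natural numbers `a` and `b` with `a + 2 ≤ b`, the open interval `(a..b)`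
has a unique 2-fattest number: there is exactly one `f` with `a < f < b` such that
every `g` with `a < g < b` and `g ≠ f` has strictly smaller 2-adic valuation. -/
theorem two_fattest_exists_unique (a b : ℕ) (hab : a + 2 ≤ b) :
    ∃! f : ℕ, (a < f ∧ f < b) ∧
      ∀ g : ℕ, a < g → g < b → g ≠ f → padicValNat 2 g < padicValNat 2 f := by
  obtain ⟨f, hf, hmax⟩ := Finset.exists_max_image (Finset.Ioo a b) (padicValNat 2)
    ⟨a + 1, Finset.mem_Ioo.mpr ⟨by omega, by omega⟩⟩
  rw [Finset.mem_Ioo] at hf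
  have hle_fat : ∀ g, a < g → g < b → padicValNat 2 g ≤ padicValNat 2 f :=
    fun g hag hgb => hmax g (Finset.mem_Ioo.mpr ⟨hag, hgb⟩)
  have hfat : ∀ g, a < g → g < b → g ≠ f → padicValNat 2 g < padicValNat 2 f := by
    intro g hag hgb hgf
    refine (hle_fat g hag hgb).lt_of_ne fun heq => ?_
    rcases hgf.lt_or_gt with hlt | hlt
    · obtain ⟨h, hgh, hhf, hvh⟩ := exists_between_padicValNat_two_lt (by omega) hlt heq
      exact absurd (hle_fat h (by omega) (by omega)) (by omega)
    · obtain ⟨h, hfh, hhg, hvh⟩ := exists_between_padicValNat_two_lt (by omega) hlt heq.symm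
      exact absurd (hle_fat h (by omega) (by omega)) (by omega)
  refine ⟨f, ⟨hf, hfat⟩, fun f' ⟨⟨haf', hf'b⟩, hfat'⟩ => by_contra fun hne => ?_⟩
  exact absurd (hfat f' haf' hf'b hne) (hfat' f hf.1 hf.2 (Ne.symm hne)).not_gt
end

section
/- Let i ≥ 1 and let a < b be natural numbers such that the open interval (a..b) contains at most one multiple of 2^i, and let f be the 2-fattest number of (a..b). Then each of the two open intervals (a..f) and (f..b) contains at most one multiple of 2^{i−1}. -/
/-!
Between two distinct multiples of `2^(i-1)` there is always a multiple of `2^i`. In `(a..b)`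
the only multiple of `2^i` can be the fattest number `f`: any other one would force
`ν₂ f > i`, giving a second multiple of `2^i`. So neither `(a..f)` nor `(f..b)` can contain
two multiples of `2^(i-1)`.
-/

lemma exists_two_mul_dvd_mem_Icc {n g₁ g₂ : ℕ} (hlt : g₁ < g₂) (h₁ : n ∣ g₁) (h₂ : n ∣ g₂) :
    ∃ m, g₁ ≤ m ∧ m ≤ g₂ ∧ 2 * n ∣ m := by
  obtain ⟨k, rfl⟩ := h₁
  obtain ⟨l, rfl⟩ := h₂
  have hkl : k < l := lt_of_mul_lt_mul_left hlt n.zero_le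
  rcases Nat.even_or_odd k with ⟨c, hc⟩ | ⟨c, hc⟩
  · exact ⟨n * k, le_rfl, hlt.le, ⟨c, by rw [hc]; ring⟩⟩
  · refine ⟨n * (k + 1), Nat.mul_le_mul_left _ k.le_succ, Nat.mul_le_mul_left _ hkl,
      ⟨c + 1, by rw [hc]; ring⟩⟩

lemma eq_of_dvd_of_forall_not_two_mul_dvd {n c d : ℕ}
    (hno : ∀ m, c < m → m < d → ¬ 2 * n ∣ m) :
    ∀ g₁ g₂ : ℕ, c < g₁ → g₁ < d → c < g₂ → g₂ < d → n ∣ g₁ → n ∣ g₂ → g₁ = g₂ := by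
  have hne : ∀ g₁ g₂, c < g₁ → g₂ < d → n ∣ g₁ → n ∣ g₂ → ¬ g₁ < g₂ := by
    intro g₁ g₂ hc hd h₁ h₂ hlt
    obtain ⟨m, h₁m, hm₂, hm⟩ := exists_two_mul_dvd_mem_Icc hlt h₁ h₂
    exact hno m (by omega) (by omega) hm
  intro g₁ g₂ hc₁ hd₁ hc₂ hd₂ h₁ h₂
  have := hne g₁ g₂ hc₁ hd₂ h₁ h₂
  have := hne g₂ g₁ hc₂ hd₁ h₂ h₁
  omega

lemma eq_of_two_pow_dvd_of_fattest {i a b f : ℕ}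
    (hone : ∀ g₁ g₂ : ℕ, a < g₁ → g₁ < b → a < g₂ → g₂ < b →
      2 ^ i ∣ g₁ → 2 ^ i ∣ g₂ → g₁ = g₂)
    (haf : a < f) (hfb : f < b)
    (hfat : ∀ g : ℕ, a < g → g < b → g ≠ f → padicValNat 2 g < padicValNat 2 f)
    {m : ℕ} (ham : a < m) (hmb : m < b) (hm : 2 ^ i ∣ m) : m = f := by
  by_contra hmf
  have hνm : i ≤ padicValNat 2 m := (padicValNat_dvd_iff_le (by omega)).mp hm
  have hνf : padicValNat 2 m < padicValNat 2 f := hfat m ham hmb hmf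
  have hf : 2 ^ i ∣ f := (padicValNat_dvd_iff_le (by omega)).mpr (by omega)
  exact hmf (hone m f ham hmb haf hfb hm hf)

theorem split_at_two_fattest_general (i a b f : ℕ) (hi : 1 ≤ i)
    (hone : ∀ g₁ g₂ : ℕ, a < g₁ → g₁ < b → a < g₂ → g₂ < b →
      2 ^ i ∣ g₁ → 2 ^ i ∣ g₂ → g₁ = g₂)
    (haf : a < f) (hfb : f < b)
    (hfat : ∀ g : ℕ, a < g → g < b → g ≠ f → padicValNat 2 g < padicValNat 2 f) :
    (∀ g₁ g₂ : ℕ, a < g₁ → g₁ < f → a < g₂ → g₂ < f →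
      2 ^ (i - 1) ∣ g₁ → 2 ^ (i - 1) ∣ g₂ → g₁ = g₂) ∧
    (∀ g₁ g₂ : ℕ, f < g₁ → g₁ < b → f < g₂ → g₂ < b →
      2 ^ (i - 1) ∣ g₁ → 2 ^ (i - 1) ∣ g₂ → g₁ = g₂) := by
  have hpow : 2 * 2 ^ (i - 1) = 2 ^ i := by rw [← pow_succ', Nat.sub_add_cancel hi]
  have honly_f : ∀ m, a < m → m < b → 2 * 2 ^ (i - 1) ∣ m → m = f := fun m ham hmb hm =>
    eq_of_two_pow_dvd_of_fattest hone haf hfb hfat ham hmb (hpow ▸ hm)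
  constructor <;> apply eq_of_dvd_of_forall_not_two_mul_dvd
  · intro m ham hmf hm
    exact hmf.ne (honly_f m ham (hmf.trans hfb) hm)
  · intro m hfm hmb hm
    exact hfm.ne' (honly_f m (haf.trans hfm) hmb hm)

/-- If the open interval `(a..b)` contains at most one multiple of `2^i` (`i ≥ 1`) and
`f` is its 2-fattest number, then each of `(a..f)` and `(f..b)` contains at most one
multiple of `2^(i-1)`. -/
theorem split_at_two_fattest (i a b f : ℕ) (hi : 1 ≤ i) (hab : a < b)
    (hone : ∀ g₁ g₂ : ℕ, a < g₁ → g₁ < b → a < g₂ → g₂ < b →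
      2 ^ i ∣ g₁ → 2 ^ i ∣ g₂ → g₁ = g₂)
    (haf : a < f) (hfb : f < b)
    (hfat : ∀ g : ℕ, a < g → g < b → g ≠ f → padicValNat 2 g < padicValNat 2 f) :
    (∀ g₁ g₂ : ℕ, a < g₁ → g₁ < f → a < g₂ → g₂ < f →
      2 ^ (i - 1) ∣ g₁ → 2 ^ (i - 1) ∣ g₂ → g₁ = g₂) ∧
    (∀ g₁ g₂ : ℕ, f < g₁ → g₁ < b → f < g₂ → g₂ < b →
      2 ^ (i - 1) ∣ g₁ → 2 ^ (i - 1) ∣ g₂ → g₁ = g₂) :=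
  split_at_two_fattest_general i a b f hi hone haf hfb hfat
end

section
/- Let ℓ < r be natural numbers and let k = ⌊log₂(ℓ XOR r)⌋ be the position of the most significant bit at which ℓ and r differ (note ℓ XOR r ≠ 0 since ℓ ≠ r). Set f = 2^k · ⌊r / 2^k⌋ (equivalently, f is r with its k lowest bits cleared, i.e., f = (−1 ≪ k) AND r). Then ℓ < f ≤ r, and f is the 2-fattest number of the half-open interval (ℓ..r]: every integer g with ℓ < g ≤ r and g ≠ f has strictly smaller 2-adic valuation than f. -/
/-!
Two numbers agree above their highest differing bit `k`, so `ℓ < r` forces bit `k` of `ℓ` to be `0`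
and that of `r` to be `1`: `⌊r / 2^k⌋ = ⌊ℓ / 2^k⌋ + 1`. Hence `f = 2^k ⌊r / 2^k⌋` is the only
multiple of `2^k` in `(ℓ..r]`, and every other `g` there has `ν₂ g < k ≤ ν₂ f`.
-/

namespace Nat

theorem div_two_pow_eq_iff_xor_lt {a b n : ℕ} : a / 2 ^ n = b / 2 ^ n ↔ a ^^^ b < 2 ^ n := by
  rw [← xor_eq_zero_iff, ← xor_div_two_pow, Nat.div_eq_zero_iff]
  simp

theorem div_two_pow_log_xor_eq_succ {a b : ℕ} (hab : a < b) :
    b / 2 ^ log 2 (a ^^^ b) = a / 2 ^ log 2 (a ^^^ b) + 1 := by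
  set k := log 2 (a ^^^ b)
  have hxor : a ^^^ b ≠ 0 := by simpa using hab.ne
  have high : a / 2 ^ (k + 1) = b / 2 ^ (k + 1) :=
    div_two_pow_eq_iff_xor_lt.2 (lt_pow_succ_log_self one_lt_two _)
  have low : a / 2 ^ k ≠ b / 2 ^ k :=
    mt div_two_pow_eq_iff_xor_lt.1 (pow_log_le_self 2 hxor).not_gt
  have mono : a / 2 ^ k ≤ b / 2 ^ k := Nat.div_le_div_right hab.le
  rw [pow_succ, ← Nat.div_div_eq_div_mul, ← Nat.div_div_eq_div_mul] at high
  omega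

theorem lt_mul_div_of_div_lt {a b d : ℕ} (h : a / d < b / d) : a < d * (b / d) := by
  have hd : 0 < d := Nat.pos_of_ne_zero (by rintro rfl; simp at h)
  rw [mul_comm, ← Nat.div_lt_iff_lt_mul hd]
  exact h

theorem eq_mul_div_of_dvd_of_mem_Ioc {a b d g : ℕ} (hd : 0 < d) (hdiv : b / d ≤ a / d + 1)
    (hdg : d ∣ g) (hag : a < g) (hgb : g ≤ b) : g = d * (b / d) := by
  obtain ⟨m, rfl⟩ := hdg
  have hlow : a / d < m := (Nat.div_lt_iff_lt_mul hd).2 (by rwa [mul_comm])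
  have hhigh : m ≤ b / d := (Nat.le_div_iff_mul_le hd).2 (by rwa [mul_comm])
  rw [show m = b / d by omega]

end Nat

theorem padicValNat_lt_of_not_dvd_of_dvd {p k f g : ℕ} [Fact p.Prime] (hf : f ≠ 0)
    (hkf : p ^ k ∣ f) (hkg : ¬p ^ k ∣ g) : padicValNat p g < padicValNat p f :=
  calc padicValNat p g < k :=
        not_le.1 fun h => hkg ((pow_dvd_pow p h).trans pow_padicValNat_dvd)
    _ ≤ padicValNat p f := (padicValNat_dvd_iff_le hf).1 hkf

/-- Let `ℓ < r`, `k = ⌊log₂ (ℓ XOR r)⌋` and `f = 2^k * ⌊r / 2^k⌋` (i.e. `r` with its `k`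
lowest bits cleared). Then `ℓ < f ≤ r` and `f` is the 2-fattest number of `(ℓ..r]`. -/
theorem two_fattest_formula (ℓ r : ℕ) (hlr : ℓ < r) :
    ℓ < 2 ^ (Nat.log 2 (ℓ ^^^ r)) * (r / 2 ^ (Nat.log 2 (ℓ ^^^ r))) ∧
    2 ^ (Nat.log 2 (ℓ ^^^ r)) * (r / 2 ^ (Nat.log 2 (ℓ ^^^ r))) ≤ r ∧
    ∀ g : ℕ, ℓ < g → g ≤ r →
      g ≠ 2 ^ (Nat.log 2 (ℓ ^^^ r)) * (r / 2 ^ (Nat.log 2 (ℓ ^^^ r))) →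
      padicValNat 2 g <
        padicValNat 2 (2 ^ (Nat.log 2 (ℓ ^^^ r)) * (r / 2 ^ (Nat.log 2 (ℓ ^^^ r)))) := by
  set k := Nat.log 2 (ℓ ^^^ r)
  have hsucc : r / 2 ^ k = ℓ / 2 ^ k + 1 := Nat.div_two_pow_log_xor_eq_succ hlr
  have hℓf : ℓ < 2 ^ k * (r / 2 ^ k) := Nat.lt_mul_div_of_div_lt (by omega)
  refine ⟨hℓf, Nat.mul_div_le r _, fun g hℓg hgr hgf => ?_⟩
  refine padicValNat_lt_of_not_dvd_of_dvd (k := k) (by omega) (dvd_mul_right _ _) fun hkg => ?_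
  exact hgf (Nat.eq_mul_div_of_dvd_of_mem_Ioc (by positivity) hsucc.le hkg hℓg hgr)
end

section
/- Let i be a natural number and ℓ < r natural numbers such that the half-open interval (ℓ..r] contains at most one multiple of 2^i, and suppose ⌊ℓ/2^i⌋ ≠ ⌊r/2^i⌋ (equivalently, the bit test (−1 ≪ i) AND ℓ ≠ (−1 ≪ i) AND r succeeds). Then f = 2^i · ⌊r/2^i⌋ satisfies ℓ < f ≤ r, f is the unique multiple of 2^i in (ℓ..r], and f is the 2-fattest number of (ℓ..r]: every integer g with ℓ < g ≤ r and g ≠ f has strictly smaller 2-adic valuation than f. -/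
/-!
Since `⌊ℓ/2^i⌋ < ⌊r/2^i⌋`, the multiple `f = 2^i ⌊r/2^i⌋` of `2^i` lies in `(ℓ..r]`, so by
hypothesis it is the only one there. Every other `g` in the interval is then not divisible by
`2^i`, whence `ν₂ g < i ≤ ν₂ f`.
-/

theorem Nat.lt_mul_div_of_div_lt_div {ℓ r d : ℕ} (h : ℓ / d < r / d) : ℓ < d * (r / d) := by
  have hd : 0 < d := Nat.pos_of_ne_zero fun hd => by simp [hd] at h
  rw [mul_comm, ← Nat.div_lt_iff_lt_mul hd]
  exact h

theorem padicValNat_lt_of_not_pow_dvd {p n a : ℕ} [Fact p.Prime] (h : ¬p ^ n ∣ a) :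
    padicValNat p a < n := by
  rw [padicValNat_dvd_iff] at h
  omega

theorem padicValNat_lt_of_not_pow_dvd_of_pow_dvd {p n a b : ℕ} [Fact p.Prime] (hb : b ≠ 0)
    (ha : ¬p ^ n ∣ a) (hbn : p ^ n ∣ b) : padicValNat p a < padicValNat p b :=
  (padicValNat_lt_of_not_pow_dvd ha).trans_le ((padicValNat_dvd_iff_le hb).mp hbn)

/-- If `(ℓ..r]` contains at most one multiple of `2^i` and `⌊ℓ/2^i⌋ ≠ ⌊r/2^i⌋`, then
`f = 2^i * ⌊r/2^i⌋` satisfies `ℓ < f ≤ r`, is the unique multiple of `2^i` in `(ℓ..r]`,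
and is the 2-fattest number of `(ℓ..r]`. -/
theorem two_fattest_of_bit_test (i ℓ r : ℕ) (hlr : ℓ < r)
    (hone : ∀ g₁ g₂ : ℕ, ℓ < g₁ → g₁ ≤ r → ℓ < g₂ → g₂ ≤ r →
      2 ^ i ∣ g₁ → 2 ^ i ∣ g₂ → g₁ = g₂)
    (hne : ℓ / 2 ^ i ≠ r / 2 ^ i) :
    ℓ < 2 ^ i * (r / 2 ^ i) ∧ 2 ^ i * (r / 2 ^ i) ≤ r ∧
    2 ^ i ∣ 2 ^ i * (r / 2 ^ i) ∧
    (∀ g : ℕ, ℓ < g → g ≤ r → 2 ^ i ∣ g → g = 2 ^ i * (r / 2 ^ i)) ∧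
    ∀ g : ℕ, ℓ < g → g ≤ r → g ≠ 2 ^ i * (r / 2 ^ i) →
      padicValNat 2 g < padicValNat 2 (2 ^ i * (r / 2 ^ i)) := by
  have hlf : ℓ < 2 ^ i * (r / 2 ^ i) :=
    Nat.lt_mul_div_of_div_lt_div ((Nat.div_le_div_right hlr.le).lt_of_ne hne)
  have hfr : 2 ^ i * (r / 2 ^ i) ≤ r := Nat.mul_div_le r (2 ^ i)
  have hdvd : 2 ^ i ∣ 2 ^ i * (r / 2 ^ i) := Dvd.intro _ rfl
  have huniq : ∀ g : ℕ, ℓ < g → g ≤ r → 2 ^ i ∣ g → g = 2 ^ i * (r / 2 ^ i) :=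
    fun g hℓg hgr hg => hone g _ hℓg hgr hlf hfr hg hdvd
  refine ⟨hlf, hfr, hdvd, huniq, fun g hℓg hgr hgf => ?_⟩
  exact padicValNat_lt_of_not_pow_dvd_of_pow_dvd (by omega)
    (fun hg => hgf (huniq g hℓg hgr hg)) hdvd
end

section
/- Let w and j be natural numbers with j ≤ w, let S be a finite set of natural numbers all less than 2^w, and let x < 2^w be such that S contains both an element < x and an element ≥ x (so x⁻ and x⁺ exist). Set m = 2^{w−j} and D(x,S) = max{x⁺−x, x−x⁻}. If m ≤ D(x,S), then either every y ∈ S with ⌊y/m⌋ = ⌊x/m⌋ satisfies y < x, or every y ∈ S with ⌊y/m⌋ = ⌊x/m⌋ satisfies y ≥ x. -/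
/-! Numbers with the same quotient by `m` lie less than `m` apart. So if the successor of `x`
is at least `m` above `x`, no element `≥ x` of `S` shares the quotient of `x`; symmetrically,
if the predecessor is at least `m` below `x`, no element `< x` does. -/

theorem Nat.lt_add_of_div_eq_div {m x y : ℕ} (hm : 0 < m) (h : y / m = x / m) : y < x + m :=
  calc y < y / m * m + m := Nat.lt_div_mul_add hm
    _ = x / m * m + m := by rw [h]
    _ ≤ x + m := Nat.add_le_add_right (Nat.div_mul_le_self x m) m

namespace Finset

variable {S : Finset ℕ} {x m y : ℕ}

theorem lt_of_div_eq_div_of_le_min'_filter_sub (hm : 0 < m) (hge : (S.filter (x ≤ ·)).Nonempty)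
    (hD : m ≤ (S.filter (x ≤ ·)).min' hge - x) (hy : y ∈ S) (hq : y / m = x / m) : y < x := by
  by_contra! hxy
  have := (S.filter (x ≤ ·)).min'_le y (mem_filter.mpr ⟨hy, hxy⟩)
  have := Nat.lt_add_of_div_eq_div hm hq
  omega

theorem le_of_div_eq_div_of_le_sub_max'_filter (hm : 0 < m) (hlt : (S.filter (· < x)).Nonempty)
    (hD : m ≤ x - (S.filter (· < x)).max' hlt) (hy : y ∈ S) (hq : y / m = x / m) : x ≤ y := by
  by_contra! hyx
  have := (S.filter (· < x)).le_max' y (mem_filter.mpr ⟨hy, hyx⟩)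
  have := Nat.lt_add_of_div_eq_div hm hq.symm
  omega

end Finset

theorem short_in_prefs_general (w j : ℕ) (S : Finset ℕ)
    (x : ℕ)
    (hlt : (S.filter (fun y => y < x)).Nonempty)
    (hge : (S.filter (fun y => x ≤ y)).Nonempty)
    (hD : 2 ^ (w - j) ≤
      max ((S.filter (fun y => x ≤ y)).min' hge - x)
          (x - (S.filter (fun y => y < x)).max' hlt)) :
    (∀ y ∈ S, y / 2 ^ (w - j) = x / 2 ^ (w - j) → y < x) ∨
    (∀ y ∈ S, y / 2 ^ (w - j) = x / 2 ^ (w - j) → x ≤ y) := by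
  have hm : 0 < 2 ^ (w - j) := Nat.two_pow_pos _
  rcases le_max_iff.mp hD with hsucc | hpred
  · exact .inl fun y hy => Finset.lt_of_div_eq_div_of_le_min'_filter_sub hm hge hsucc hy
  · exact .inr fun y hy => Finset.le_of_div_eq_div_of_le_sub_max'_filter hm hlt hpred hy

/-- If `2^(w-j) ≤ D(x,S)`, then `x` is either larger than all elements of `S` sharing
the length-`j` prefix of `x`, or smaller than or equal to all of them. -/
theorem short_in_prefs (w j : ℕ) (hj : j ≤ w) (S : Finset ℕ)
    (hSw : ∀ y ∈ S, y < 2 ^ w) (x : ℕ) (hx : x < 2 ^ w)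
    (hlt : (S.filter (fun y => y < x)).Nonempty)
    (hge : (S.filter (fun y => x ≤ y)).Nonempty)
    (hD : 2 ^ (w - j) ≤
      max ((S.filter (fun y => x ≤ y)).min' hge - x)
          (x - (S.filter (fun y => y < x)).max' hlt)) :
    (∀ y ∈ S, y / 2 ^ (w - j) = x / 2 ^ (w - j) → y < x) ∨
    (∀ y ∈ S, y / 2 ^ (w - j) = x / 2 ^ (w - j) → x ≤ y) :=
  short_in_prefs_general w j S x hlt hge hD
end
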